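/- arXiv:math/0505156 — 2 statements merged into one kernel-verified Lean document; each statement's English description precedes it below -/
import Mathlib

section
/- (General decoupling lemma.) Let X_1,…,X_k be mutually independent random variables taking values in measurable spaces, and let X_1',…,X_k' be independent copies of X_1,…,X_k such that all 2k variables X_1,…,X_k,X_1',…,X_k' are mutually independent. Let E(·,…,·) be a measurable event in the k values. For each subset S ⊆ {1,…,k} define X_i^S := X_i if i ∈ S and X_i^S := X_i' if i ∉ S. Then P(E(X_1,…,X_k)) ≤ P( ⋀_{S ⊆ {1,…,k}} E(X_1^S,…,X_k^S) )^{1/2^k}. -/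
/-!
Encode the two families as one random point `(Xᵢ, Xᵢ')ᵢ` of `∏ᵢ (Sᵢ × Sᵢ)`; by independence its
law is `∏ᵢ (νᵢ ⊗ νᵢ)`, where `νᵢ` is the law of `Xᵢ`. For `T ⊆ {1,…,k}` let `D_T` be the event
that `E` holds at every mixture taking the coordinates outside `T` from the first copy, so that
`D_∅ = E(X)` and `D_{1,…,k}` is the event on the right. For `j ∉ T`, once all pairs but the
`j`-th are fixed, `D_T` only depends on `Xⱼ` and `D_{T ∪ {j}}` is the intersection of its
versions for `Xⱼ` and for `Xⱼ'`. Hence `P(D_{T ∪ {j}}) = E[P(D_T | rest)²] ≥ P(D_T)²` by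
Cauchy–Schwarz, and doubling the exponent `k` times gives `P(E(X))^{2^k} ≤ P(D_{1,…,k})`.
-/

open MeasureTheory ProbabilityTheory
open scoped ENNReal

theorem sq_lintegral_le_lintegral_sq {α : Type*} [MeasurableSpace α] {μ : Measure α}
    [IsProbabilityMeasure μ] {f : α → ℝ≥0∞} (hf : AEMeasurable f μ) :
    (∫⁻ a, f a ∂μ) ^ 2 ≤ ∫⁻ a, f a ^ 2 ∂μ := by
  have h := ENNReal.lintegral_mul_le_Lp_mul_Lq μ Real.HolderConjugate.two_two hf
    aemeasurable_const (g := fun _ => 1)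
  simp only [Pi.mul_apply, mul_one, ENNReal.one_rpow, lintegral_const, measure_univ] at h
  calc (∫⁻ a, f a ∂μ) ^ 2 ≤ ((∫⁻ a, f a ^ (2 : ℝ) ∂μ) ^ (1 / 2 : ℝ)) ^ 2 :=
        pow_le_pow_left' (by simpa using h) 2
    _ = ∫⁻ a, f a ^ 2 ∂μ := by
        rw [← ENNReal.rpow_natCast, ← ENNReal.rpow_mul]; norm_num

namespace MeasureTheory.Measure

variable {ι : Type*} [Fintype ι] [DecidableEq ι] {Y : ι → Type*} [∀ i, MeasurableSpace (Y i)]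
  (μ : ∀ i, Measure (Y i)) [∀ i, IsProbabilityMeasure (μ i)]

theorem pi_apply_eq_lintegral_update (j : ι) {D : Set (∀ i, Y i)} (hD : MeasurableSet D) :
    Measure.pi μ D = ∫⁻ x, μ j (Function.update x j ⁻¹' D) ∂Measure.pi μ := by
  have hf : Measurable (D.indicator (1 : (∀ i, Y i) → ℝ≥0∞)) := measurable_one.indicator hD
  have hslice : (fun x => μ j (Function.update x j ⁻¹' D)) = ∫⋯∫⁻_{j}, D.indicator 1 ∂μ := by
    ext x
    rw [lmarginal_singleton, ← lintegral_indicator_one (measurable_update x hD)]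
    rfl
  rw [hslice, ← lintegral_indicator_one hD]
  refine lintegral_eq_of_lmarginal_eq {j} hf (hf.lmarginal μ) ?_
  -- the marginal over `j` no longer depends on `x j`, so integrating over `j` again changes nothing
  ext x
  simp [lmarginal_singleton (∫⋯∫⁻_{j}, D.indicator 1 ∂μ), lmarginal_update_of_mem]

end MeasureTheory.Measure

section Decoupling

open Function Finset

variable {ι : Type*} [DecidableEq ι] {S : ι → Type*}

def mixture (s : Finset ι) (p : ∀ i, S i × S i) : ∀ i, S i :=
  s.piecewise (fun i => (p i).1) (fun i => (p i).2)

theorem mixture_update_of_mem {s : Finset ι} {j : ι} (hj : j ∈ s) (p : ∀ i, S i × S i)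
    (q : S j × S j) : mixture s (update p j q) = update (mixture s p) j q.1 := by
  ext i
  rcases eq_or_ne i j with rfl | hi <;> simp [mixture, Finset.piecewise, *]

theorem mixture_erase_update {s : Finset ι} {j : ι} (hj : j ∈ s) (p : ∀ i, S i × S i)
    (a b : S j) : mixture (s.erase j) (update p j (a, b)) = mixture s (update p j (b, a)) := by
  ext i
  rcases eq_or_ne i j with rfl | hi <;> simp [mixture, Finset.piecewise, *]

theorem measurable_mixture [∀ i, MeasurableSpace (S i)] (s : Finset ι) :
    Measurable (mixture (S := S) s) := by
  refine measurable_pi_lambda _ fun i => ?_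
  by_cases hi : i ∈ s
  · simpa [mixture, hi] using (measurable_pi_apply i).fst
  · simpa [mixture, hi] using (measurable_pi_apply i).snd

variable [Fintype ι]

theorem Finset.forall_compl_insert_subset_iff {T : Finset ι} {j : ι} (hj : j ∉ T)
    {P : Finset ι → Prop} :
    (∀ s, (insert j T)ᶜ ⊆ s → P s) ↔ ∀ s, Tᶜ ⊆ s → P s ∧ P (s.erase j) := by
  have hjT : j ∈ Tᶜ := mem_compl.2 hj
  rw [compl_insert]
  refine ⟨fun h s hs => ⟨h s ((erase_subset j _).trans hs), h _ (erase_subset_erase j hs)⟩,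
    fun h s hs => ?_⟩
  by_cases hjs : j ∈ s
  · refine (h s fun i hi => ?_).1
    rcases eq_or_ne i j with rfl | hij
    exacts [hjs, hs (mem_erase.2 ⟨hij, hi⟩)]
  · have := (h (insert j s) ?_).2
    · rwa [erase_insert hjs] at this
    · rw [← insert_erase hjT]
      exact insert_subset_insert j hs

def decouplingSet (E : Set (∀ i, S i)) (T : Finset ι) : Set (∀ i, S i × S i) :=
  {p | ∀ s, Tᶜ ⊆ s → mixture s p ∈ E}

variable {E : Set (∀ i, S i)}

theorem decouplingSet_empty : decouplingSet E ∅ = {p | (fun i => (p i).1) ∈ E} := by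
  ext p
  simp [decouplingSet, mixture]

theorem decouplingSet_univ : decouplingSet E univ = {p | ∀ s, mixture s p ∈ E} := by
  simp [decouplingSet]

theorem measurableSet_decouplingSet [∀ i, MeasurableSpace (S i)] (hE : MeasurableSet E)
    (T : Finset ι) : MeasurableSet (decouplingSet E T) := by
  simp only [decouplingSet, Set.ofPred_forall]
  exact .iInter fun s => .iInter fun _ => measurable_mixture s hE

theorem update_mem_decouplingSet_iff_of_notMem {T : Finset ι} {j : ι} (hj : j ∉ T)
    (p : ∀ i, S i × S i) (a b c : S j) :
    update p j (a, b) ∈ decouplingSet E T ↔ update p j (a, c) ∈ decouplingSet E T := by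
  have hmem : ∀ s, Tᶜ ⊆ s → j ∈ s := fun s hs => hs (mem_compl.2 hj)
  simp +contextual [decouplingSet, mixture_update_of_mem, hmem]

theorem update_mem_decouplingSet_insert_iff {T : Finset ι} {j : ι} (hj : j ∉ T)
    (p : ∀ i, S i × S i) (a b : S j) :
    update p j (a, b) ∈ decouplingSet E (insert j T) ↔
      update p j (a, b) ∈ decouplingSet E T ∧ update p j (b, a) ∈ decouplingSet E T := by
  have hmem : ∀ s, Tᶜ ⊆ s → j ∈ s := fun s hs => hs (mem_compl.2 hj)
  simp only [decouplingSet, Set.mem_ofPred_eq, Finset.forall_compl_insert_subset_iff hj,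
    ← forall_and]
  exact forall₂_congr fun s hs => by rw [mixture_erase_update (hmem s hs)]

variable [∀ i, MeasurableSpace (S i)] (ν : ∀ i, Measure (S i)) [∀ i, IsProbabilityMeasure (ν i)]

theorem sq_pi_prod_le_of_update_mem_iff {j : ι} {D D' : Set (∀ i, S i × S i)}
    (hD : MeasurableSet D) (hD' : MeasurableSet D')
    (h_snd : ∀ p a b c, update p j (a, b) ∈ D ↔ update p j (a, c) ∈ D)
    (h_double : ∀ p a b,
      update p j (a, b) ∈ D' ↔ update p j (a, b) ∈ D ∧ update p j (b, a) ∈ D) :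
    Measure.pi (fun i => (ν i).prod (ν i)) D ^ 2 ≤ Measure.pi (fun i => (ν i).prod (ν i)) D' := by
  set A : (∀ i, S i × S i) → Set (S j) := fun p => {a | update p j (a, (p j).2) ∈ D}
  have hslice : ∀ p, update p j ⁻¹' D = A p ×ˢ Set.univ := fun p => by
    ext ⟨a, b⟩
    simpa [A] using h_snd p a b (p j).2
  have hslice' : ∀ p, update p j ⁻¹' D' = A p ×ˢ A p := fun p => by
    ext ⟨a, b⟩
    simpa [A, h_double] using and_congr (h_snd p a b (p j).2) (h_snd p b a (p j).2)
  have hA : Measurable fun p => ν j (A p) := by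
    have := measurable_measure_prodMk_left (ν := (ν j).prod (ν j))
      (measurable_update' (X := fun i => S i × S i) (a := j) hD)
    simpa only [Set.preimage_preimage, hslice, Measure.prod_prod, measure_univ, mul_one]
      using this
  rw [Measure.pi_apply_eq_lintegral_update _ j hD, Measure.pi_apply_eq_lintegral_update _ j hD']
  simp only [hslice, hslice', Measure.prod_prod, measure_univ, mul_one, ← sq]
  exact sq_lintegral_le_lintegral_sq hA.aemeasurable

theorem pow_pi_prod_decouplingSet_empty_le (hE : MeasurableSet E) (T : Finset ι) :
    Measure.pi (fun i => (ν i).prod (ν i)) (decouplingSet E ∅) ^ 2 ^ T.card ≤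
      Measure.pi (fun i => (ν i).prod (ν i)) (decouplingSet E T) := by
  induction T using Finset.induction_on with
  | empty => simp
  | insert j T hj ih =>
    rw [card_insert_of_notMem hj, pow_succ, pow_mul]
    calc _ ≤ Measure.pi (fun i => (ν i).prod (ν i)) (decouplingSet E T) ^ 2 :=
          pow_le_pow_left' ih 2
      _ ≤ _ := sq_pi_prod_le_of_update_mem_iff ν (measurableSet_decouplingSet hE T)
          (measurableSet_decouplingSet hE _) (update_mem_decouplingSet_iff_of_notMem hj)
          (update_mem_decouplingSet_insert_iff hj)

end Decoupling

theorem map_fun_prodMk_eq_pi_prod {Ω : Type*} [MeasurableSpace Ω] {μ : Measure Ω}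
    [IsProbabilityMeasure μ] {ι : Type*} [Fintype ι] {S : ι → Type*}
    [mS : ∀ i, MeasurableSpace (S i)] {X X' : ∀ i, Ω → S i}
    (hX : ∀ i, Measurable (X i)) (hX' : ∀ i, Measurable (X' i))
    (hindep : iIndepFun (β := Sum.elim S S)
      (m := fun p => Sum.casesOn (motive := fun p => MeasurableSpace (Sum.elim S S p)) p
        (fun j => mS j) (fun j => mS j))
      (fun p => Sum.casesOn (motive := fun p => Ω → Sum.elim S S p) p
        (fun j => X j) (fun j => X' j)) μ) :
    μ.map (fun ω i => (X i ω, X' i ω)) =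
      Measure.pi fun i => (μ.map (X i)).prod (μ.map (X' i)) := by
  refine (Measure.pi_eq_generateFrom (fun _ => generateFrom_prod) (fun _ => isPiSystem_prod)
    (fun _ => Measure.FiniteSpanningSetsIn.prod (Measure.toFiniteSpanningSetsIn _)
      (Measure.toFiniteSpanningSetsIn _)) ?_).symm
  intro s hs
  choose B hB C hC hBC using hs
  simp only [Set.mem_ofPred_eq] at hB hC
  obtain rfl : (fun i => B i ×ˢ C i) = s := funext hBC
  have hpre : (fun ω i => (X i ω, X' i ω)) ⁻¹' Set.univ.pi (fun i => B i ×ˢ C i) =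
      ⋂ p ∈ Finset.univ, (Sum.casesOn (motive := fun p => Ω → Sum.elim S S p) p
        (fun j => X j) (fun j => X' j)) ⁻¹'
        (Sum.rec (motive := fun p => Set (Sum.elim S S p)) B C p) := by
    ext ω
    simp only [Set.mem_preimage, Set.mem_pi, Set.mem_univ, Set.mem_prod, forall_const,
      forall_and, Finset.mem_univ, Set.iInter_true, Set.mem_iInter, Sum.forall]
    rfl
  rw [Measure.map_apply (measurable_pi_lambda _ fun i => (hX i).prodMk (hX' i))
    (.univ_pi fun i => (hB i).prod (hC i)), hpre,
    hindep.measure_inter_preimage_eq_mul _ fun p _ => by cases p <;> simp [*]]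
  simp [Fintype.prod_sum_type, Finset.prod_mul_distrib, Measure.prod_prod,
    Measure.map_apply (hX _) (hB _), Measure.map_apply (hX' _) (hC _)]

/-- General decoupling lemma: let `X_1, …, X_k` be random variables with values in measurable
spaces `S_1, …, S_k`, and let `X_1', …, X_k'` be independent copies such that all `2k`
variables are mutually independent.  For a subset `s ⊆ {1,…,k}` write `X_i^s := X_i` if
`i ∈ s` and `X_i^s := X_i'` otherwise.  Then for any measurable event `E ⊆ S_1 × ⋯ × S_k`,
`P(E(X_1,…,X_k)) ≤ P(⋀_{s ⊆ {1,…,k}} E(X_1^s,…,X_k^s))^{1/2^k}`. -/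
theorem general_decoupling_lemma {Ω : Type*} [MeasurableSpace Ω] (μ : MeasureTheory.Measure Ω)
    [IsProbabilityMeasure μ] (k : ℕ) (S : Fin k → Type*) [mS : ∀ i, MeasurableSpace (S i)]
    (X X' : ∀ i, Ω → S i)
    (hX : ∀ i, Measurable (X i)) (hX' : ∀ i, Measurable (X' i))
    (hcopy : ∀ i, IdentDistrib (X i) (X' i) μ μ)
    (hindep : iIndepFun (β := Sum.elim S S)
      (m := fun p => Sum.casesOn (motive := fun p => MeasurableSpace (Sum.elim S S p)) p
        (fun j => mS j) (fun j => mS j))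
      (fun p => Sum.casesOn (motive := fun p => Ω → Sum.elim S S p) p
        (fun j => X j) (fun j => X' j)) μ)
    (E : Set (∀ i, S i)) (hE : MeasurableSet E) :
    μ {ω | (fun i => X i ω) ∈ E} ≤
      (μ {ω | ∀ s : Finset (Fin k), (fun i => if i ∈ s then X i ω else X' i ω) ∈ E})
        ^ ((1 : ℝ) / 2 ^ k) := by
  have := fun i => Measure.isProbabilityMeasure_map (μ := μ) (hX i).aemeasurable
  have hZ : Measurable fun ω i => (X i ω, X' i ω) :=
    measurable_pi_lambda _ fun i => (hX i).prodMk (hX' i)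
  have hlaw : μ.map (fun ω i => (X i ω, X' i ω)) =
      Measure.pi fun i => (μ.map (X i)).prod (μ.map (X i)) := by
    simpa only [(hcopy _).map_eq] using map_fun_prodMk_eq_pi_prod hX hX' hindep
  have hdiag : μ {ω | (fun i => X i ω) ∈ E} =
      μ.map (fun ω i => (X i ω, X' i ω)) (decouplingSet E ∅) := by
    rw [Measure.map_apply hZ (measurableSet_decouplingSet hE ∅), decouplingSet_empty]; rfl
  have hmix : μ {ω | ∀ s : Finset (Fin k), (fun i => if i ∈ s then X i ω else X' i ω) ∈ E} =
      μ.map (fun ω i => (X i ω, X' i ω)) (decouplingSet E .univ) := by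
    rw [Measure.map_apply hZ (measurableSet_decouplingSet hE .univ), decouplingSet_univ]; rfl
  rw [hdiag, hmix, hlaw, one_div, ENNReal.le_rpow_inv_iff (by positivity)]
  simpa [← ENNReal.rpow_natCast] using pow_pi_prod_decouplingSet_empty_le _ hE .univ
end

section
/- Fix 0 < ρ < 1 and let d ≤ n. Let H be a linear subspace of ℝ^n of dimension at most d. Let v = (v_1,…,v_n) be a random vector whose coordinates are mutually independent real random variables, at least n−1 of which have the ρ-property (max_{c∈ℝ} P(v_i = c) ≤ ρ). Then P(v ∈ H) ≤ ρ^{n−d−1}. -/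
open MeasureTheory ProbabilityTheory

/-- A real random variable `ξ` (on a probability space with measure `μ`) has the
`ρ`-property if `P(ξ = c) ≤ ρ` for every real `c`. -/
def RhoProperty {Ω : Type*} [MeasurableSpace Ω] (μ : Measure Ω) (ξ : Ω → ℝ) (ρ : ℝ) : Prop :=
  ∀ c : ℝ, μ {ω | ξ ω = c} ≤ ENNReal.ofReal ρ

/-!
Pick a set `B` of at most `dim H ≤ d` coordinates that determines the points of `H`, and let
`T = s \ B`, so `|T| ≥ n - d - 1`. Each point of `H` is determined by its coordinates outside `T`,
so by Fubini, once those coordinates are fixed, the event `v ∈ H` forces the `T`-coordinates to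
equal one specific point, which by independence and the `ρ`-property has probability at most
`ρ ^ |T|`.
-/

open Module in
/-- Take a linearly independent subfamily of the coordinate functionals restricted to `W` with
the same span; it has at most `dim W* = dim W` members. -/
theorem Submodule.exists_finset_card_le_finrank_injOn_restrict {K ι : Type*} [Field K]
    [Finite ι] (W : Submodule K (ι → K)) :
    ∃ B : Finset ι, B.card ≤ finrank K W ∧ Set.InjOn B.restrict (W : Set (ι → K)) := by
  classical
  let coord : ι → Dual K W := fun i => (LinearMap.proj i).comp W.subtype
  obtain ⟨κ, a, ha, hspan, hli⟩ := exists_linearIndependent' K coord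
  have : Finite κ := .of_injective a ha
  have := Fintype.ofFinite κ
  refine ⟨Finset.univ.image a, ?_, fun x hx y hy hxy => ?_⟩
  · rw [Finset.card_image_of_injective _ ha, Finset.card_univ, ← Subspace.dual_finrank_eq]
    exact hli.fintype_card_le_finrank
  let z : W := ⟨x - y, W.sub_mem hx hy⟩
  have hker : Submodule.span K (Set.range coord) ≤ LinearMap.ker (Dual.eval K W z) := by
    rw [← hspan, Submodule.span_le]
    rintro _ ⟨k, rfl⟩
    have := congrFun hxy ⟨a k, by simp⟩
    simpa [coord, z, sub_eq_zero] using this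
  funext i
  have := hker (Submodule.subset_span ⟨i, rfl⟩)
  simpa [coord, z, sub_eq_zero] using this

theorem Set.InjOn.finset_restrict_mono {ι : Type*} {α : ι → Type*} {B C : Finset ι}
    {S : Set (∀ i, α i)} (hBC : B ⊆ C) (h : Set.InjOn B.restrict S) :
    Set.InjOn C.restrict S := by
  rw [← Finset.restrict₂_comp_restrict hBC] at h
  exact h.of_comp

namespace MeasureTheory.Measure

variable {ι : Type*} [Fintype ι] {α : ι → Type*} [∀ i, MeasurableSpace (α i)]

theorem pi_le_pow_card_of_subsingleton (ν : ∀ i, Measure (α i)) [∀ i, SigmaFinite (ν i)]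
    {r : ENNReal} (hr : ∀ i a, ν i {a} ≤ r) {S : Set (∀ i, α i)} (hS : S.Subsingleton) :
    Measure.pi ν S ≤ r ^ Fintype.card ι := by
  rcases hS.eq_empty_or_singleton with rfl | ⟨x, rfl⟩
  · simp
  · rw [pi_singleton, ← Finset.card_univ, ← Finset.prod_const]
    exact Finset.prod_le_prod' fun i _ => hr i (x i)

/-- If the points of `S` are determined by their coordinates outside `T`, then every slice of `S`
obtained by fixing those coordinates is a subsingleton. -/
theorem pi_le_pow_card_of_injOn_restrict [DecidableEq ι] (ν : ∀ i, Measure (α i))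
    [∀ i, IsProbabilityMeasure (ν i)] (T : Finset ι) {r : ENNReal}
    (hr : ∀ i ∈ T, ∀ a, ν i {a} ≤ r) {S : Set (∀ i, α i)} (hS : MeasurableSet S)
    (hinj : Set.InjOn (Tᶜ).restrict S) :
    Measure.pi ν S ≤ r ^ T.card := by
  let e := MeasurableEquiv.piEquivPiSubtypeProd α (· ∈ T)
  let S' := e.symm ⁻¹' S
  have hslice :
      ∀ y, Measure.pi (fun i : T => ν i) ((fun x => (x, y)) ⁻¹' S') ≤ r ^ T.card := by
    intro y
    rw [← Fintype.card_coe T]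
    refine pi_le_pow_card_of_subsingleton _ (fun (i : T) a => hr i i.property a)
      fun x₁ hx₁ x₂ hx₂ => ?_
    have hout : (Tᶜ).restrict (e.symm (x₁, y)) = (Tᶜ).restrict (e.symm (x₂, y)) := by
      funext ⟨i, hi⟩
      have hi : i ∉ T := Finset.mem_compl.mp hi
      simp [e, MeasurableEquiv.piEquivPiSubtypeProd, Equiv.piEquivPiSubtypeProd_symm_apply, hi]
    exact congrArg Prod.fst (e.symm.injective (hinj hx₁ hx₂ hout))
  calc Measure.pi ν S = Measure.pi ν (e ⁻¹' S') := by simp [S', Set.preimage_preimage]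
    _ = ∫⁻ y, Measure.pi (fun i : T => ν i) ((fun x => (x, y)) ⁻¹' S')
          ∂Measure.pi (fun i : {i // i ∉ T} => ν i) := by
      rw [(measurePreserving_piEquivPiSubtypeProd ν (· ∈ T)).measure_preimage_equiv,
        prod_apply_symm (e.symm.measurable hS)]
      congr! -- the two `Fintype ↥T` instances in play differ
    _ ≤ ∫⁻ _, r ^ T.card ∂Measure.pi (fun i : {i // i ∉ T} => ν i) :=
      lintegral_mono hslice
    _ = r ^ T.card := by simp

end MeasureTheory.Measure

theorem prob_random_vector_in_subspace_general (ρ : ℝ) (hρ0 : 0 < ρ) (hρ1 : ρ < 1)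
    (n d : ℕ) (H : Submodule ℝ (Fin n → ℝ)) (hH : Module.finrank ℝ H ≤ d)
    {Ω : Type*} [MeasurableSpace Ω] (μ : Measure Ω) [IsProbabilityMeasure μ]
    (v : Fin n → Ω → ℝ) (hmeas : ∀ i, Measurable (v i))
    (hindep : iIndepFun v μ)
    (s : Finset (Fin n)) (hs : n - 1 ≤ s.card)
    (hρprop : ∀ i ∈ s, RhoProperty μ (v i) ρ) :
    μ {ω | (fun i => v i ω) ∈ H} ≤ ENNReal.ofReal (ρ ^ ((n : ℝ) - d - 1)) := by
  classical
  obtain ⟨B, hBcard, hBinj⟩ := H.exists_finset_card_le_finrank_injOn_restrict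
  let T := s \ B
  have hTinj : Set.InjOn (Tᶜ).restrict (H : Set (Fin n → ℝ)) :=
    hBinj.finset_restrict_mono fun i hi => by simp [T, hi]
  have hHmeas := H.closed_of_finiteDimensional.measurableSet
  have : ∀ i, IsProbabilityMeasure (μ.map (v i)) := fun i =>
    Measure.isProbabilityMeasure_map (hmeas i).aemeasurable
  have hatom : ∀ i ∈ T, ∀ c, μ.map (v i) {c} ≤ ENNReal.ofReal ρ := fun i hi c => by
    rw [Measure.map_apply (hmeas i) (measurableSet_singleton c)]
    exact hρprop i (Finset.mem_sdiff.mp hi).1 c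
  have hTcard : (n : ℝ) - d - 1 ≤ T.card := by
    have : s.card - B.card ≤ T.card := Finset.le_card_sdiff B s
    have : n ≤ T.card + d + 1 := by omega
    have : (n : ℝ) ≤ T.card + d + 1 := by exact_mod_cast this
    linarith
  calc μ {ω | (fun i => v i ω) ∈ H}
      = Measure.pi (fun i => μ.map (v i)) H := by
        rw [← hindep.map_fun_eq_pi_map fun i => (hmeas i).aemeasurable,
          Measure.map_apply (measurable_pi_lambda _ hmeas) hHmeas]
        rfl
    _ ≤ ENNReal.ofReal ρ ^ T.card :=
        Measure.pi_le_pow_card_of_injOn_restrict _ T hatom hHmeas hTinj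
    _ = ENNReal.ofReal (ρ ^ (T.card : ℝ)) := by
        rw [Real.rpow_natCast, ENNReal.ofReal_pow hρ0.le]
    _ ≤ ENNReal.ofReal (ρ ^ ((n : ℝ) - d - 1)) :=
        ENNReal.ofReal_le_ofReal (Real.rpow_le_rpow_of_exponent_ge hρ0 hρ1.le hTcard)

/-- Let `0 < ρ < 1`, `d ≤ n`, and let `H` be a linear subspace of `ℝ^n` of dimension at most
`d`.  Let `v` be a random vector with mutually independent real coordinates, at least `n - 1`
of which have the `ρ`-property.  Then `P(v ∈ H) ≤ ρ^{n-d-1}`. -/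
theorem prob_random_vector_in_subspace (ρ : ℝ) (hρ0 : 0 < ρ) (hρ1 : ρ < 1)
    (n d : ℕ) (hdn : d ≤ n) (H : Submodule ℝ (Fin n → ℝ)) (hH : Module.finrank ℝ H ≤ d)
    {Ω : Type*} [MeasurableSpace Ω] (μ : Measure Ω) [IsProbabilityMeasure μ]
    (v : Fin n → Ω → ℝ) (hmeas : ∀ i, Measurable (v i))
    (hindep : iIndepFun v μ)
    (s : Finset (Fin n)) (hs : n - 1 ≤ s.card)
    (hρprop : ∀ i ∈ s, RhoProperty μ (v i) ρ) :
    μ {ω | (fun i => v i ω) ∈ H} ≤ ENNReal.ofReal (ρ ^ ((n : ℝ) - d - 1)) :=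
  prob_random_vector_in_subspace_general ρ hρ0 hρ1 n d H hH μ v hmeas hindep s hs hρprop
end
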